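/- arXiv:1703.09945 — 2 statements merged into one kernel-verified Lean document; each statement's English description precedes it below -/
import Mathlib

section
/- Let k ≥ 1 and let A, B, γ, η : Fin k → ℝ with ⟨A,γ⟩ > 0, ⟨B,γ⟩ > 0, ⟨A,η⟩ ≥ 0 and ⟨B,η⟩ ≥ 0. Set C = max (⟨A,γ⟩/⟨B,γ⟩) (⟨B,γ⟩/⟨A,γ⟩) and suppose ⟨B,η⟩/⟨B,γ⟩ ≥ ⟨A,η⟩/⟨A,γ⟩. Then the function F(t) = ⟨A_t,η⟩/⟨A_t,γ⟩ satisfies 0 ≤ F′(t) ≤ C·(⟨B,η⟩/⟨B,γ⟩) for every t ∈ [0,1], and consequently for every t ∈ [0,1]: ⟨A_t,η⟩/⟨A_t,γ⟩ ≥ (⟨B,η⟩/⟨B,γ⟩)·(1 − C·(1−t)). -/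
/-!
Write `a = ⟨A,γ⟩`, `b = ⟨B,γ⟩`, `p = ⟨A,η⟩`, `q = ⟨B,η⟩`. Inner products are affine along the
segment, so `F t = (t q + (1-t) p) / (t b + (1-t) a)`, whose derivative is
`(q a - p b) / D²` with `D = t b + (1-t) a`. The hypothesis `p/a ≤ q/b` makes it nonnegative.
Since `D ≥ min a b` and `C · min a b = max a b`, we get `a b ≤ C D²`, which bounds the
derivative by `C q / b`. The lower bound on `F` then follows from the mean value theorem
on `[t, 1]`, as `F 1 = q / b`.
-/

open Set

theorem Finset.sum_segment_mul {ι R : Type*} [Fintype ι] [CommRing R] (A B v : ι → R) (s : R) :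
    ∑ i, (s * B i + (1 - s) * A i) * v i = s * ∑ i, B i * v i + (1 - s) * ∑ i, A i * v i := by
  simp only [Finset.mul_sum, ← Finset.sum_add_distrib]
  exact Finset.sum_congr rfl fun i _ => by ring

theorem image_sub_le_mul_sub_of_hasDerivAt_le {f f' : ℝ → ℝ} {M x y : ℝ}
    (hf : ∀ z ∈ Icc x y, HasDerivAt f (f' z) z) (hM : ∀ z ∈ Icc x y, f' z ≤ M) (hxy : x ≤ y) :
    f y - f x ≤ M * (y - x) :=
  (convex_Icc x y).image_sub_le_mul_sub_of_deriv_le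
    (fun z hz => (hf z hz).continuousAt.continuousWithinAt)
    (fun z hz => (hf z (interior_subset hz)).differentiableAt.differentiableWithinAt)
    (fun z hz => (hf z (interior_subset hz)).deriv ▸ hM z (interior_subset hz))
    x (left_mem_Icc.2 hxy) y (right_mem_Icc.2 hxy) hxy

theorem min_le_segment {a b t : ℝ} (ht : t ∈ Icc (0 : ℝ) 1) : min a b ≤ t * b + (1 - t) * a := by
  have := Convex.min_le_combo a b (sub_nonneg.2 ht.2) ht.1 (by ring)
  simpa only [smul_eq_mul, add_comm] using this

theorem max_div_div_mul_min {a b : ℝ} (ha : 0 < a) (hb : 0 < b) :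
    max (a / b) (b / a) * min a b = max a b := by
  rcases le_total a b with h | h
  · rw [max_eq_right ((div_le_div_iff₀ hb ha).2 (by nlinarith)), min_eq_left h, max_eq_right h,
      div_mul_cancel₀ b ha.ne']
  · rw [max_eq_left ((div_le_div_iff₀ ha hb).2 (by nlinarith)), min_eq_right h, max_eq_left h,
      div_mul_cancel₀ a hb.ne']

section SegmentRatio

variable {a b p q t : ℝ}

theorem hasDerivAt_segment_ratio (hD : t * b + (1 - t) * a ≠ 0) :
    HasDerivAt (fun s => (s * q + (1 - s) * p) / (s * b + (1 - s) * a))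
      ((q * a - p * b) / (t * b + (1 - t) * a) ^ 2) t := by
  have hline : ∀ u v : ℝ, HasDerivAt (fun s => s * v + (1 - s) * u) (v - u) t := fun u v =>
    (((hasDerivAt_id t).mul_const v).add
      (((hasDerivAt_const t 1).sub (hasDerivAt_id t)).mul_const u)).congr_deriv (by ring)
  exact ((hline p q).div (hline a b) hD).congr_deriv (by ring)

theorem segment_ratio_deriv_nonneg (ha : 0 < a) (hb : 0 < b) (hpq : p / a ≤ q / b) :
    0 ≤ (q * a - p * b) / (t * b + (1 - t) * a) ^ 2 :=
  div_nonneg (sub_nonneg.2 ((div_le_div_iff₀ ha hb).1 hpq)) (sq_nonneg _)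

theorem segment_ratio_deriv_le (ha : 0 < a) (hb : 0 < b) (hp : 0 ≤ p) (hq : 0 ≤ q)
    (ht : t ∈ Icc (0 : ℝ) 1) :
    (q * a - p * b) / (t * b + (1 - t) * a) ^ 2 ≤ max (a / b) (b / a) * (q / b) := by
  set D := t * b + (1 - t) * a
  have hmin : min a b ≤ D := min_le_segment ht
  have hD : 0 < D := (lt_min ha hb).trans_le hmin
  have hab : a * b ≤ max (a / b) (b / a) * D ^ 2 := calc
    a * b = max (a / b) (b / a) * min a b * min a b := by
      rw [max_div_div_mul_min ha hb, max_mul_min]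
    _ ≤ max (a / b) (b / a) * D * D := by gcongr
    _ = max (a / b) (b / a) * D ^ 2 := by ring
  rw [div_le_iff₀ (by positivity)]
  calc q * a - p * b ≤ q * a := sub_le_self _ (mul_nonneg hp hb.le)
    _ = q / b * (a * b) := by field_simp
    _ ≤ q / b * (max (a / b) (b / a) * D ^ 2) := by gcongr
    _ = max (a / b) (b / a) * (q / b) * D ^ 2 := by ring

end SegmentRatio

theorem stretching_factor_deriv_bound_general
    (k : ℕ) (A B γ η : Fin k → ℝ)
    (hAγ : 0 < ∑ i, A i * γ i) (hBγ : 0 < ∑ i, B i * γ i)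
    (hAη : 0 ≤ ∑ i, A i * η i) (hBη : 0 ≤ ∑ i, B i * η i)
    (C : ℝ)
    (hC : C = max ((∑ i, A i * γ i) / (∑ i, B i * γ i))
                   ((∑ i, B i * γ i) / (∑ i, A i * γ i)))
    (hmono : (∑ i, B i * η i) / (∑ i, B i * γ i) ≥
             (∑ i, A i * η i) / (∑ i, A i * γ i)) :
    (∀ t ∈ Set.Icc (0:ℝ) 1,
      ∃ d : ℝ,
        HasDerivAt
          (fun s : ℝ =>
            (∑ i, (s * B i + (1 - s) * A i) * η i) /
            (∑ i, (s * B i + (1 - s) * A i) * γ i))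
          d t ∧
        0 ≤ d ∧ d ≤ C * ((∑ i, B i * η i) / (∑ i, B i * γ i))) ∧
    (∀ t ∈ Set.Icc (0:ℝ) 1,
      (∑ i, (t * B i + (1 - t) * A i) * η i) /
        (∑ i, (t * B i + (1 - t) * A i) * γ i) ≥
      ((∑ i, B i * η i) / (∑ i, B i * γ i)) * (1 - C * (1 - t))) := by
  simp only [Finset.sum_segment_mul]
  subst hC
  set a := ∑ i, A i * γ i
  set b := ∑ i, B i * γ i
  set p := ∑ i, A i * η i
  set q := ∑ i, B i * η i
  have hderiv : ∀ t ∈ Icc (0 : ℝ) 1,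
      HasDerivAt (fun s => (s * q + (1 - s) * p) / (s * b + (1 - s) * a))
        ((q * a - p * b) / (t * b + (1 - t) * a) ^ 2) t ∧
      0 ≤ (q * a - p * b) / (t * b + (1 - t) * a) ^ 2 ∧
      (q * a - p * b) / (t * b + (1 - t) * a) ^ 2 ≤ max (a / b) (b / a) * (q / b) :=
    fun t ht => ⟨hasDerivAt_segment_ratio ((lt_min hAγ hBγ).trans_le (min_le_segment ht)).ne',
      segment_ratio_deriv_nonneg hAγ hBγ hmono, segment_ratio_deriv_le hAγ hBγ hAη hBη ht⟩
  refine ⟨fun t ht => ⟨_, hderiv t ht⟩, fun t ht => ?_⟩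
  have hmvt := image_sub_le_mul_sub_of_hasDerivAt_le
    (fun z hz => (hderiv z (Icc_subset_Icc ht.1 le_rfl hz)).1)
    (fun z hz => (hderiv z (Icc_subset_Icc ht.1 le_rfl hz)).2.2) ht.2
  simp only [one_mul, sub_self, zero_mul, add_zero] at hmvt
  linarith

/-- Lemma 6.5 of the paper: along the segment `A_t = t•B + (1-t)•A`, with
`C = max (⟨A,γ⟩/⟨B,γ⟩) (⟨B,γ⟩/⟨A,γ⟩)` and assuming
`⟨B,η⟩/⟨B,γ⟩ ≥ ⟨A,η⟩/⟨A,γ⟩`, the stretching factor `F(t) = ⟨A_t,η⟩/⟨A_t,γ⟩`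
has derivative between `0` and `C·⟨B,η⟩/⟨B,γ⟩`, and consequently
`F(t) ≥ (⟨B,η⟩/⟨B,γ⟩)·(1 − C·(1−t))` on `[0,1]`. -/
theorem stretching_factor_deriv_bound
    (k : ℕ) (hk : 1 ≤ k) (A B γ η : Fin k → ℝ)
    (hAγ : 0 < ∑ i, A i * γ i) (hBγ : 0 < ∑ i, B i * γ i)
    (hAη : 0 ≤ ∑ i, A i * η i) (hBη : 0 ≤ ∑ i, B i * η i)
    (C : ℝ)
    (hC : C = max ((∑ i, A i * γ i) / (∑ i, B i * γ i))
                   ((∑ i, B i * γ i) / (∑ i, A i * γ i)))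
    (hmono : (∑ i, B i * η i) / (∑ i, B i * γ i) ≥
             (∑ i, A i * η i) / (∑ i, A i * γ i)) :
    (∀ t ∈ Set.Icc (0:ℝ) 1,
      ∃ d : ℝ,
        HasDerivAt
          (fun s : ℝ =>
            (∑ i, (s * B i + (1 - s) * A i) * η i) /
            (∑ i, (s * B i + (1 - s) * A i) * γ i))
          d t ∧
        0 ≤ d ∧ d ≤ C * ((∑ i, B i * η i) / (∑ i, B i * γ i))) ∧
    (∀ t ∈ Set.Icc (0:ℝ) 1,
      (∑ i, (t * B i + (1 - t) * A i) * η i) /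
        (∑ i, (t * B i + (1 - t) * A i) * γ i) ≥
      ((∑ i, B i * η i) / (∑ i, B i * γ i)) * (1 - C * (1 - t))) :=
  stretching_factor_deriv_bound_general k A B γ η hAγ hBγ hAη hBη C hC hmono
end

section
/- Let n ≥ 1 and let C be a real number. Then there exists a finite set Φ of automorphisms of F = FreeGroup (Fin n) such that every automorphism φ of F satisfying ‖φ g‖ ≤ C · ‖g‖ for all g ≠ 1 can be written as φ = ψ ∘ c_x for some ψ ∈ Φ and x ∈ F, where c_x denotes the inner automorphism g ↦ x * g * x⁻¹. In other words, for any constant C there are only finitely many outer automorphisms φ of F_n with ‖φ‖_B ≤ C. -/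
/-!
An automorphism of a free group is determined, up to an inner automorphism, by the conjugacy
classes of the images of the products `xᵢxⱼ` of two basis elements (`i = j` allowed). When
`‖φ‖ ≤ C` these classes have cyclically reduced length at most `2C`, so only finitely many
tuples of classes occur.

For the rigidity, let `θ` preserve the class of every `xᵢxⱼ`. Taking `i = j`, uniqueness of roots
gives `θ(xᵢ) ~ xᵢ`; normalise `θ(a) = a`. If `θ(xⱼ) = y xⱼ y⁻¹`, then `a y xⱼ y⁻¹ ~ a xⱼ`. Once
powers of `a` are cancelled from the left of `y` and powers of `xⱼ` from its right, the word
`a y xⱼ y⁻¹` is cyclically reduced of length `2 + 2|y|`, so `y ∈ ⟨a⟩⟨xⱼ⟩` and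
`θ(xⱼ) = aᵖ xⱼ a⁻ᵖ`; testing `xⱼxₖ` in the same way shows that `p` does not depend on `j`.
Every length argument here uses that a cyclically reduced word is a shortest element of its
conjugacy class, which follows by comparing the lengths of high powers.
-/

noncomputable def cyclen {n : ℕ} (g : FreeGroup (Fin n)) : ℕ :=
  sInf { l : ℕ | ∃ x : FreeGroup (Fin n), l = (x * g * x⁻¹).norm }

theorem IsConj.of_pow {G : Type*} [Group G] [IsMulTorsionFree G] {a b : G} {n : ℕ}
    (hn : n ≠ 0) (h : IsConj (a ^ n) (b ^ n)) : IsConj a b := by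
  obtain ⟨c, hc⟩ := isConj_iff.1 h
  exact isConj_iff.2 ⟨c, pow_left_injective hn (by simpa [conj_pow] using hc)⟩

theorem Set.Finite.exists_finset_forall_exists_eq {X Y : Type*} {f : X → Y} {S : Set X}
    (h : (f '' S).Finite) : ∃ Φ : Finset X, ∀ x ∈ S, ∃ ψ ∈ Φ, f ψ = f x := by
  obtain ⟨u, -, hinj, hu⟩ := (Set.surjOn_image f S).exists_subset_injOn_image_eq
  have hufin : u.Finite := Set.Finite.of_finite_image (hu ▸ h) hinj
  refine ⟨hufin.toFinset, fun x hx => ?_⟩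
  obtain ⟨ψ, hψ, he⟩ := hu.symm ▸ Set.mem_image_of_mem f hx
  exact ⟨ψ, hufin.mem_toFinset.2 hψ, he⟩

namespace FreeGroup

variable {α : Type*}

theorem isCyclicallyReduced_pair (a b : α) : IsCyclicallyReduced [(a, true), (b, true)] := by
  simp [isCyclicallyReduced_iff, IsReduced]

theorem exists_zpow_eq_mk_singleton (x : α × Bool) : ∃ e : ℤ, of x.1 ^ e = mk [x] := by
  obtain ⟨i, _ | _⟩ := x
  · exact ⟨-1, by rw [zpow_neg_one]; rfl⟩
  · exact ⟨1, zpow_one _⟩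

theorem isConj_map_of {θ : FreeGroup α →* FreeGroup α}
    (h : ∀ i j, IsConj (of i * of j) (θ (of i * of j))) (i : α) : IsConj (of i) (θ (of i)) :=
  .of_pow two_ne_zero (by simpa [sq] using h i i)

def pairConjClasses (φ : FreeGroup α ≃* FreeGroup α) (p : α × α) : ConjClasses (FreeGroup α) :=
  ConjClasses.mk (φ (of p.1 * of p.2))

variable [DecidableEq α] {L L₁ L₂ : List (α × Bool)}

theorem IsReduced.norm_mk (h : IsReduced L) : (mk L).norm = L.length := by
  rw [norm, toWord_mk, h.reduce_eq]

theorem norm_pow_le (x : FreeGroup α) (m : ℕ) : (x ^ m).norm ≤ m * x.norm := by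
  induction m with
  | zero => simp
  | succ m ih => rw [pow_succ, add_one_mul]; exact (norm_mul_le _ _).trans (by omega)

theorem IsCyclicallyReduced.norm_mk_pow (h : IsCyclicallyReduced L) (m : ℕ) :
    (mk L ^ m).norm = m * L.length := by
  rw [pow_mk, (h.flatten_replicate m).isReduced.norm_mk]
  simp [List.length_flatten]

theorem IsCyclicallyReduced.length_le_norm_conj (h : IsCyclicallyReduced L) (x : FreeGroup α) :
    L.length ≤ (x * mk L * x⁻¹).norm := by
  set m := 2 * x.norm + 1
  have hpow : m * L.length ≤ 2 * x.norm + m * (x * mk L * x⁻¹).norm := calc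
    m * L.length = (x⁻¹ * (x * mk L * x⁻¹) ^ m * x).norm := by
      rw [← h.norm_mk_pow, conj_pow]; group
    _ ≤ x⁻¹.norm + ((x * mk L * x⁻¹) ^ m).norm + x.norm :=
      (norm_mul_le _ _).trans (by gcongr; exact norm_mul_le _ _)
    _ ≤ 2 * x.norm + m * (x * mk L * x⁻¹).norm := by
      rw [norm_inv_eq]; have := norm_pow_le (x * mk L * x⁻¹) m; omega
  by_contra! hlt
  have : m * ((x * mk L * x⁻¹).norm + 1) ≤ m * L.length := Nat.mul_le_mul_left m hlt
  rw [mul_add] at this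
  omega

theorem IsCyclicallyReduced.length_eq_of_isConj (h₁ : IsCyclicallyReduced L₁)
    (h₂ : IsCyclicallyReduced L₂) (hc : IsConj (mk L₁) (mk L₂)) : L₁.length = L₂.length := by
  obtain ⟨x, hx⟩ := isConj_iff.1 hc
  obtain ⟨y, hy⟩ := isConj_iff.1 hc.symm
  have h₁₂ := h₁.length_le_norm_conj x
  have h₂₁ := h₂.length_le_norm_conj y
  rw [hx, h₂.isReduced.norm_mk] at h₁₂
  rw [hy, h₁.isReduced.norm_mk] at h₂₁
  omega

theorem IsReduced.invRev (h : IsReduced L) : IsReduced (invRev L) :=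
  isReduced_iff_reduce_eq.2 (by rw [reduce_invRev, h.reduce_eq])

theorem IsReduced.isCyclicallyReduced_cons_append_cons_invRev {a b : α} (hL : IsReduced L)
    (hhead : ∀ x ∈ L.head?, x.1 ≠ a) (hlast : ∀ x ∈ L.getLast?, x.1 ≠ b) :
    IsCyclicallyReduced ((a, true) :: L ++ (b, true) :: FreeGroup.invRev L) := by
  rcases eq_or_ne L [] with rfl | hne
  · exact isCyclicallyReduced_pair a b
  obtain ⟨x, hx⟩ := Option.ne_none_iff_exists'.1 (List.head?_eq_none_iff.not.2 hne)
  obtain ⟨y, hy⟩ := Option.ne_none_iff_exists'.1 (List.getLast?_eq_none_iff.not.2 hne)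
  have hx' := hhead x (by simp [hx])
  have hy' := hlast y (by simp [hy])
  have hL' := hL.invRev
  rw [FreeGroup.invRev] at hL'
  simp only [isCyclicallyReduced_iff, IsReduced, List.isChain_append, List.isChain_cons,
    FreeGroup.invRev, List.head?_reverse, List.getLast?_reverse, List.getLast?_map,
    List.head?_map, hx, hy, List.getLast?_cons, List.head?_cons, List.head?_append,
    List.getLast?_append, Option.mem_def, Option.some.injEq, Option.map_some, Option.getD_some,
    Option.or_some, forall_eq']
  exact ⟨⟨⟨fun h => absurd h.symm hx', hL⟩, ⟨fun h => absurd h.symm hy', hL'⟩,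
    fun h => absurd h hy'⟩, fun h => absurd h hx'⟩

theorem eq_one_of_isConj_of_mul_conj {a b : α} {u : FreeGroup α}
    (hhead : ∀ x ∈ u.toWord.head?, x.1 ≠ a) (hlast : ∀ x ∈ u.toWord.getLast?, x.1 ≠ b)
    (h : IsConj (of a * of b) (of a * u * of b * u⁻¹)) : u = 1 := by
  have hmk :
      of a * u * of b * u⁻¹ = mk ((a, true) :: u.toWord ++ (b, true) :: invRev u.toWord) := by
    rw [← mk_toWord (x := u), inv_mk]
    change mk [(a, true)] * _ * mk [(b, true)] * _ = _
    simp [mul_mk]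
  have hlen := (isCyclicallyReduced_pair a b).length_eq_of_isConj
    (isReduced_toWord.isCyclicallyReduced_cons_append_cons_invRev hhead hlast) (hmk ▸ h)
  simp only [List.length_cons, List.length_nil, List.cons_append, List.length_append,
    invRev_length] at hlen
  exact toWord_eq_nil_iff.1 (List.eq_nil_of_length_eq_zero (by omega))

theorem exists_zpow_mul_of_mem_head? {u : FreeGroup α} {x : α × Bool}
    (hx : x ∈ u.toWord.head?) :
    ∃ (e : ℤ) (v : FreeGroup α), u = of x.1 ^ e * v ∧ v.norm < u.norm := by
  obtain ⟨T, hT⟩ := List.head?_eq_some_iff.1 hx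
  obtain ⟨e, he⟩ := exists_zpow_eq_mk_singleton x
  refine ⟨e, mk T, ?_, norm_mk_le.trans_lt (by simp [norm, hT])⟩
  rw [he, mul_mk, List.singleton_append, ← hT, mk_toWord]

theorem exists_mul_zpow_of_mem_getLast? {u : FreeGroup α} {x : α × Bool}
    (hx : x ∈ u.toWord.getLast?) :
    ∃ (e : ℤ) (v : FreeGroup α), u = v * of x.1 ^ e ∧ v.norm < u.norm := by
  obtain ⟨T, hT⟩ := List.getLast?_eq_some_iff.1 hx
  obtain ⟨e, he⟩ := exists_zpow_eq_mk_singleton x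
  refine ⟨e, mk T, ?_, norm_mk_le.trans_lt (by simp [norm, hT])⟩
  rw [he, mul_mk, ← hT, mk_toWord]

theorem exists_zpow_mul_zpow_of_isConj {a b : α} {u : FreeGroup α}
    (h : IsConj (of a * of b) (of a * u * of b * u⁻¹)) :
    ∃ p q : ℤ, u = of a ^ p * of b ^ q := by
  induction hn : u.norm using Nat.strong_induction_on generalizing u with
  | _ N ih =>
  by_cases hhead : ∃ x ∈ u.toWord.head?, x.1 = a
  · obtain ⟨x, hx, rfl⟩ := hhead
    obtain ⟨e, v, rfl, hv⟩ := exists_zpow_mul_of_mem_head? hx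
    have hv' : IsConj (of x.1 * of b) (of x.1 * v * of b * v⁻¹) :=
      h.trans (isConj_iff.2 ⟨(of x.1 ^ e)⁻¹, by group⟩)
    obtain ⟨p, q, rfl⟩ := ih _ (hn ▸ hv) hv' rfl
    exact ⟨e + p, q, by group⟩
  by_cases hlast : ∃ x ∈ u.toWord.getLast?, x.1 = b
  · obtain ⟨x, hx, rfl⟩ := hlast
    obtain ⟨e, v, rfl, hv⟩ := exists_mul_zpow_of_mem_getLast? hx
    have hv' : IsConj (of a * of x.1) (of a * v * of x.1 * v⁻¹) := by
      convert h using 1; group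
    obtain ⟨p, q, rfl⟩ := ih _ (hn ▸ hv) hv' rfl
    exact ⟨p, q + e, by group⟩
  push Not at hhead hlast
  exact ⟨0, 0, by simp [eq_one_of_isConj_of_mul_conj hhead hlast h]⟩

theorem eq_zero_of_isConj_of_mul_zpow_conj {a j k : α} (hj : j ≠ a) (hk : k ≠ a) {δ : ℤ}
    (h : IsConj (of j * of k) (of j * of a ^ δ * of k * (of a ^ δ)⁻¹)) : δ = 0 := by
  have hletters : ∀ x ∈ (of a ^ δ).toWord, x.1 = a := by
    obtain ⟨m, rfl | rfl⟩ := Int.eq_nat_or_neg δ <;>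
      simp +contextual [toWord_inv, toWord_of_pow, invRev]
  have hu := eq_one_of_isConj_of_mul_conj
    (fun x hx => (hletters x (List.mem_of_mem_head? hx)).trans_ne hj.symm)
    (fun x hx => (hletters x (List.mem_of_mem_getLast? hx)).trans_ne hk.symm) h
  exact (IsMulTorsionFree.zpow_eq_one_iff_right (of_ne_one a)).1 hu

theorem exists_zpow_conj_of_map_of_eq {θ : FreeGroup α →* FreeGroup α} {a : α}
    (ha : θ (of a) = of a) (h : ∀ i j, IsConj (of i * of j) (θ (of i * of j))) (j : α) :
    ∃ p : ℤ, θ (of j) = of a ^ p * of j * (of a ^ p)⁻¹ := by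
  obtain ⟨y, hy⟩ := isConj_iff.1 (isConj_map_of h j)
  have : IsConj (of a * of j) (of a * y * of j * y⁻¹) := by
    simpa [ha, ← hy, mul_assoc] using h a j
  obtain ⟨p, q, rfl⟩ := exists_zpow_mul_zpow_of_isConj this
  exact ⟨p, by rw [← hy]; group⟩

theorem exists_conj_of_isConj_map_of_mul_of (θ : FreeGroup α →* FreeGroup α)
    (h : ∀ i j, IsConj (of i * of j) (θ (of i * of j))) : ∃ z, ∀ g, θ g = z * g * z⁻¹ := by
  suffices ∃ z, ∀ j, θ (of j) = z * of j * z⁻¹ by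
    obtain ⟨z, hz⟩ := this
    exact ⟨z, DFunLike.congr_fun (ext_hom θ (MulAut.conj z).toMonoidHom hz)⟩
  rcases isEmpty_or_nonempty α with _ | ⟨⟨a⟩⟩
  · exact ⟨1, isEmptyElim⟩
  obtain ⟨X, hX⟩ := isConj_iff.1 (isConj_map_of h a)
  set θ' := (MulAut.conj X⁻¹).toMonoidHom.comp θ
  have hθ : ∀ g, θ g = X * θ' g * X⁻¹ := fun g => by simp [θ']; group
  have ha : θ' (of a) = of a := by simp [θ', ← hX]; group
  have h' : ∀ i j, IsConj (of i * of j) (θ' (of i * of j)) :=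
    fun i j => (h i j).trans (isConj_iff.2 ⟨X⁻¹, rfl⟩)
  choose p hp using exists_zpow_conj_of_map_of_eq ha h'
  by_cases hb : ∃ b, b ≠ a
  · obtain ⟨b, hb⟩ := hb
    refine ⟨X * of a ^ p b, fun j => ?_⟩
    obtain rfl | hj := eq_or_ne j a
    · rw [hθ, ha]; group
    have hδ : p j - p b = 0 := by
      refine eq_zero_of_isConj_of_mul_zpow_conj hb hj
        ((h' b j).trans (isConj_iff.2 ⟨of a ^ (-p b), ?_⟩))
      rw [_root_.map_mul, hp, hp]; group
    rw [hθ, hp, sub_eq_zero.1 hδ]; group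
  · push Not at hb
    exact ⟨X, fun j => by rw [hb j, hX]⟩

theorem exists_conj_eq_of_pairConjClasses_eq {φ ψ : FreeGroup α ≃* FreeGroup α}
    (h : pairConjClasses φ = pairConjClasses ψ) : ∃ z, ∀ g, φ g = ψ (z * g * z⁻¹) := by
  have hconj : ∀ i j, IsConj (of i * of j) ((φ.trans ψ.symm).toMonoidHom (of i * of j)) := by
    intro i j
    have := ConjClasses.mk_eq_mk_iff_isConj.1 (congrFun h (i, j)).symm
    simpa using ψ.symm.toMonoidHom.map_isConj this
  obtain ⟨z, hz⟩ := exists_conj_of_isConj_map_of_mul_of _ hconj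
  exact ⟨z, fun g => by simpa using congrArg ψ (hz g)⟩

theorem finite_setOf_norm_le [Finite α] (M : ℕ) : {g : FreeGroup α | g.norm ≤ M}.Finite :=
  (List.finite_length_le _ M).preimage toWord_injective.injOn

end FreeGroup

open FreeGroup

section cyclen

variable {n : ℕ}

theorem cyclen_le_norm_conj (g x : FreeGroup (Fin n)) : cyclen g ≤ (x * g * x⁻¹).norm :=
  Nat.sInf_le ⟨x, rfl⟩

theorem exists_norm_conj_eq_cyclen (g : FreeGroup (Fin n)) :
    ∃ x : FreeGroup (Fin n), (x * g * x⁻¹).norm = cyclen g := by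
  obtain ⟨x, hx⟩ : cyclen g ∈ {l | ∃ x : FreeGroup (Fin n), l = (x * g * x⁻¹).norm} :=
    Nat.sInf_mem ⟨_, 1, rfl⟩
  exact ⟨x, hx.symm⟩

theorem FreeGroup.IsCyclicallyReduced.cyclen_mk {L : List (Fin n × Bool)}
    (h : IsCyclicallyReduced L) : cyclen (mk L) = L.length := by
  obtain ⟨x, hx⟩ := exists_norm_conj_eq_cyclen (mk L)
  refine le_antisymm ?_ (hx ▸ h.length_le_norm_conj x)
  simpa [h.isReduced.norm_mk] using cyclen_le_norm_conj (mk L) 1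

theorem cyclen_of_mul_of (i j : Fin n) : cyclen (of i * of j) = 2 :=
  (isCyclicallyReduced_pair i j).cyclen_mk

theorem finite_setOf_cyclen_le (M : ℕ) :
    {c : ConjClasses (FreeGroup (Fin n)) | ∃ g, ConjClasses.mk g = c ∧ cyclen g ≤ M}.Finite := by
  refine ((finite_setOf_norm_le M).image ConjClasses.mk).subset ?_
  rintro _ ⟨g, rfl, hg⟩
  obtain ⟨x, hx⟩ := exists_norm_conj_eq_cyclen g
  exact ⟨x * g * x⁻¹, hx.trans_le hg,
    ConjClasses.mk_eq_mk_iff_isConj.2 (isConj_iff.2 ⟨x, rfl⟩).symm⟩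

theorem finite_image_pairConjClasses (C : ℝ) :
    (pairConjClasses '' {φ : FreeGroup (Fin n) ≃* FreeGroup (Fin n) |
      ∀ g, g ≠ 1 → (cyclen (φ g) : ℝ) ≤ C * cyclen g}).Finite := by
  refine (Set.Finite.pi (t := fun _ => _) fun _ => finite_setOf_cyclen_le ⌊2 * C⌋₊).subset ?_
  rintro _ ⟨φ, hφ, rfl⟩ ⟨i, j⟩ -
  refine ⟨_, rfl, Nat.le_floor ?_⟩
  have hne : of i * of j ≠ 1 := fun h1 => by
    have := cyclen_le_norm_conj (of i * of j) 1
    rw [cyclen_of_mul_of, h1] at this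
    simp at this
  simpa [cyclen_of_mul_of, mul_comm] using hφ _ hne

end cyclen

theorem finitely_many_outer_automorphisms_of_bounded_norm_general
    (n : ℕ) (C : ℝ) :
    ∃ Φ : Finset (FreeGroup (Fin n) ≃* FreeGroup (Fin n)),
      ∀ φ : FreeGroup (Fin n) ≃* FreeGroup (Fin n),
        (∀ g : FreeGroup (Fin n), g ≠ 1 → (cyclen (φ g) : ℝ) ≤ C * cyclen g) →
        ∃ ψ ∈ Φ, ∃ x : FreeGroup (Fin n),
          ∀ g : FreeGroup (Fin n), φ g = ψ (x * g * x⁻¹) := by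
  obtain ⟨Φ, hΦ⟩ := (finite_image_pairConjClasses C).exists_finset_forall_exists_eq
  refine ⟨Φ, fun φ hφ => ?_⟩
  obtain ⟨ψ, hψ, he⟩ := hΦ φ hφ
  obtain ⟨x, hx⟩ := exists_conj_eq_of_pairConjClasses_eq he.symm
  exact ⟨ψ, hψ, x, hx⟩

/-- For any constant `C` there are only finitely many outer automorphisms `φ`
of `F_n` with `‖φ‖_B ≤ C`: there is a finite set `Φ` of automorphisms such
that every automorphism satisfying `‖φ g‖ ≤ C·‖g‖` for all `g ≠ 1` is the
composition of some `ψ ∈ Φ` with an inner automorphism. -/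
theorem finitely_many_outer_automorphisms_of_bounded_norm
    (n : ℕ) (hn : 1 ≤ n) (C : ℝ) :
    ∃ Φ : Finset (FreeGroup (Fin n) ≃* FreeGroup (Fin n)),
      ∀ φ : FreeGroup (Fin n) ≃* FreeGroup (Fin n),
        (∀ g : FreeGroup (Fin n), g ≠ 1 → (cyclen (φ g) : ℝ) ≤ C * cyclen g) →
        ∃ ψ ∈ Φ, ∃ x : FreeGroup (Fin n),
          ∀ g : FreeGroup (Fin n), φ g = ψ (x * g * x⁻¹) :=
  finitely_many_outer_automorphisms_of_bounded_norm_general n C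
end
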